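/- Let L be a Lie ring acting on a Z_p-module M via ψ: L → End(M) with [M, _d L] = 0, d < p. Define exp(ψ)(a) = Σ_{k=0}^{p-1} ψ(a)^k/k!. Then for every L-invariant submodule U of M and every a ∈ L, (exp(ψ)(a) - id)(U) ⊆ [U, L]. Consequently, setting [M, exp(L)] = Span{m - exp(ψ)(a)(m) : a ∈ L, m ∈ M} and iterating, one has [M, _i exp(L)] ⊆ [M, _i L] for all i ≥ 1; in particular the group action exp(ψ) also has length at most d. -/

import Mathlib

attribute [local instance 100] LieRing.ofAssociativeRing

/-- Truncated exponential `∑_{k<p} f^k/k!` of an endomorphism of a `ℤ_[p]`-module. -/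
noncomputable def texp (p : ℕ) [Fact p.Prime] {M : Type*} [AddCommGroup M] [Module ℤ_[p] M]
    (f : Module.End ℤ_[p] M) : Module.End ℤ_[p] M :=
  ∑ k ∈ Finset.range p, Ring.inverse ((k.factorial : ℤ_[p])) • f ^ k

/-- Truncated logarithm `∑_{1≤k≤p-1} (-1)^{k+1}(g-1)^k/k`. -/
noncomputable def tlog (p : ℕ) [Fact p.Prime] {M : Type*} [AddCommGroup M] [Module ℤ_[p] M]
    (g : Module.End ℤ_[p] M) : Module.End ℤ_[p] M :=
  ∑ k ∈ Finset.Icc 1 (p - 1), ((-1 : ℤ_[p]) ^ (k + 1) * Ring.inverse ((k : ℤ_[p]))) • (g - 1) ^ k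


/-- `[U, L] = Span{a·m : m ∈ U, a ∈ L}`. -/
noncomputable def lieBr (p : ℕ) [Fact p.Prime] {M L : Type*} [AddCommGroup M] [Module ℤ_[p] M]
    [LieRing L] [LieAlgebra ℤ_[p] L]
    (ψ : L →ₗ⁅ℤ_[p]⁆ Module.End ℤ_[p] M) (U : Submodule ℤ_[p] M) : Submodule ℤ_[p] M :=
  Submodule.span ℤ_[p] {x | ∃ a : L, ∃ m ∈ U, x = ψ a m}

/-- Iterated `[M, _i L]`, with `[M, _0 L] = M`. -/
noncomputable def lieIter (p : ℕ) [Fact p.Prime] {M L : Type*} [AddCommGroup M] [Module ℤ_[p] M]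
    [LieRing L] [LieAlgebra ℤ_[p] L]
    (ψ : L →ₗ⁅ℤ_[p]⁆ Module.End ℤ_[p] M) : ℕ → Submodule ℤ_[p] M
  | 0 => ⊤
  | (i+1) => lieBr p ψ (lieIter p ψ i)


/-- `[U, exp(L)] = Span{m - exp(ψ(a))·m : m ∈ U, a ∈ L}`. -/
noncomputable def expBr (p : ℕ) [Fact p.Prime] {M L : Type*} [AddCommGroup M] [Module ℤ_[p] M]
    [LieRing L] [LieAlgebra ℤ_[p] L]
    (ψ : L →ₗ⁅ℤ_[p]⁆ Module.End ℤ_[p] M) (U : Submodule ℤ_[p] M) : Submodule ℤ_[p] M :=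
  Submodule.span ℤ_[p] {x | ∃ a : L, ∃ m ∈ U, x = m - texp p (ψ a) m}

/-- Iterated `[M, _i exp(L)]`. -/
noncomputable def expIter (p : ℕ) [Fact p.Prime] {M L : Type*} [AddCommGroup M] [Module ℤ_[p] M]
    [LieRing L] [LieAlgebra ℤ_[p] L]
    (ψ : L →ₗ⁅ℤ_[p]⁆ Module.End ℤ_[p] M) : ℕ → Submodule ℤ_[p] M
  | 0 => ⊤
  | (i+1) => expBr p ψ (expIter p ψ i)

/-!
The truncated exponential satisfies `texp f - 1 = f ∘ E` with `E` a polynomial in `f`, because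
its constant term is `1/0! = 1`. Hence for an `L`-invariant submodule `U` and `m ∈ U`,
`exp(ψ a) m - m = ψ a (E m)` with `E m ∈ U`, which is a generator of `[U, L]`. Since `[U, L]` is
again invariant (`ψ a (ψ b u) = ψ ⁅a, b⁆ u + ψ b (ψ a u)`), induction on `i` gives
`[M, _i exp(L)] ≤ [M, _i L]`.
-/

lemma Module.End.pow_apply_mem {R M : Type*} [Semiring R] [AddCommMonoid M] [Module R M]
    (f : Module.End R M) {U : Submodule R M} (hU : ∀ m ∈ U, f m ∈ U) (k : ℕ) {m : M}
    (hm : m ∈ U) : (f ^ k) m ∈ U := by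
  induction k with
  | zero => simpa using hm
  | succ k ih => rw [pow_succ', Module.End.mul_apply]; exact hU _ ih

section TruncatedExp

variable {p : ℕ} [Fact p.Prime] {M : Type*} [AddCommGroup M] [Module ℤ_[p] M]

lemma texp_sub_one_eq_mul (f : Module.End ℤ_[p] M) :
    texp p f - 1 =
      f * ∑ k ∈ Finset.range (p - 1), Ring.inverse (((k + 1).factorial : ℤ_[p])) • f ^ k := by
  have hp : Finset.range p = Finset.range (p - 1 + 1) := by
    rw [Nat.sub_add_cancel (Fact.out : p.Prime).one_le]
  rw [texp, hp, Finset.sum_range_succ', Finset.mul_sum]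
  simp [pow_succ']

end TruncatedExp

section LieAction

variable {p : ℕ} [Fact p.Prime] {M L : Type*} [AddCommGroup M] [Module ℤ_[p] M]
    [LieRing L] [LieAlgebra ℤ_[p] L] (ψ : L →ₗ⁅ℤ_[p]⁆ Module.End ℤ_[p] M)

lemma apply_mem_lieBr {U : Submodule ℤ_[p] M} (a : L) {m : M} (hm : m ∈ U) :
    ψ a m ∈ lieBr p ψ U :=
  Submodule.subset_span ⟨a, m, hm, rfl⟩

lemma lieBr_mono {U V : Submodule ℤ_[p] M} (hUV : U ≤ V) : lieBr p ψ U ≤ lieBr p ψ V :=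
  Submodule.span_mono fun _ ⟨a, m, hm, hx⟩ => ⟨a, m, hUV hm, hx⟩

lemma expBr_mono {U V : Submodule ℤ_[p] M} (hUV : U ≤ V) : expBr p ψ U ≤ expBr p ψ V :=
  Submodule.span_mono fun _ ⟨a, m, hm, hx⟩ => ⟨a, m, hUV hm, hx⟩

lemma apply_apply_eq_lie_apply_add (a b : L) (m : M) :
    ψ a (ψ b m) = ψ ⁅a, b⁆ m + ψ b (ψ a m) := by
  rw [LieHom.map_lie, Ring.lie_def, LinearMap.sub_apply, Module.End.mul_apply,
    Module.End.mul_apply, sub_add_cancel]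

lemma lieBr_invariant {U : Submodule ℤ_[p] M} (hU : ∀ a : L, ∀ m ∈ U, ψ a m ∈ U) (a : L) :
    ∀ m ∈ lieBr p ψ U, ψ a m ∈ lieBr p ψ U := by
  intro m hm
  induction hm using Submodule.span_induction with
  | mem x hx =>
    obtain ⟨b, u, hu, rfl⟩ := hx
    rw [apply_apply_eq_lie_apply_add]
    exact add_mem (apply_mem_lieBr ψ _ hu) (apply_mem_lieBr ψ b (hU a u hu))
  | zero => simp
  | add x y _ _ hx hy => rw [map_add]; exact add_mem hx hy
  | smul c x _ hx => rw [map_smul]; exact Submodule.smul_mem _ c hx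

lemma lieIter_invariant (i : ℕ) (a : L) : ∀ m ∈ lieIter p ψ i, ψ a m ∈ lieIter p ψ i := by
  induction i generalizing a with
  | zero => exact fun _ _ => trivial
  | succ i ih => exact lieBr_invariant ψ ih a

lemma texp_apply_sub_self_mem_lieBr {U : Submodule ℤ_[p] M}
    (hU : ∀ a : L, ∀ m ∈ U, ψ a m ∈ U) (a : L) {m : M} (hm : m ∈ U) :
    texp p (ψ a) m - m ∈ lieBr p ψ U := by
  set E := ∑ k ∈ Finset.range (p - 1), Ring.inverse (((k + 1).factorial : ℤ_[p])) • ψ a ^ k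
  have hEm : E m ∈ U := by
    rw [LinearMap.sum_apply]
    exact Submodule.sum_mem _ fun k _ => U.smul_mem _ ((ψ a).pow_apply_mem (hU a) k hm)
  have hsub : texp p (ψ a) m - m = ψ a (E m) := by
    rw [← Module.End.mul_apply, ← texp_sub_one_eq_mul, LinearMap.sub_apply, Module.End.one_apply]
  rw [hsub]
  exact apply_mem_lieBr ψ a hEm

lemma expBr_le_lieBr {U : Submodule ℤ_[p] M} (hU : ∀ a : L, ∀ m ∈ U, ψ a m ∈ U) :
    expBr p ψ U ≤ lieBr p ψ U := by
  rw [expBr, Submodule.span_le]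
  rintro _ ⟨a, m, hm, rfl⟩
  rw [← neg_sub]
  exact neg_mem (texp_apply_sub_self_mem_lieBr ψ hU a hm)

lemma expIter_le_lieIter (i : ℕ) : expIter p ψ i ≤ lieIter p ψ i := by
  induction i with
  | zero => exact le_rfl
  | succ i ih =>
    calc expIter p ψ (i + 1) ≤ expBr p ψ (lieIter p ψ i) := expBr_mono ψ ih
      _ ≤ lieIter p ψ (i + 1) := expBr_le_lieBr ψ (lieIter_invariant ψ i)

end LieAction

theorem stmt7_general {p : ℕ} [Fact p.Prime] {M L : Type*} [AddCommGroup M] [Module ℤ_[p] M]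
    [LieRing L] [LieAlgebra ℤ_[p] L] (ψ : L →ₗ⁅ℤ_[p]⁆ Module.End ℤ_[p] M)
    (d : ℕ) (h : lieIter p ψ d = ⊥) :
    (∀ U : Submodule ℤ_[p] M, (∀ a : L, ∀ m ∈ U, ψ a m ∈ U) →
      ∀ a : L, ∀ m ∈ U, texp p (ψ a) m - m ∈ lieBr p ψ U) ∧
    (∀ i : ℕ, 1 ≤ i → expIter p ψ i ≤ lieIter p ψ i) ∧
    expIter p ψ d = ⊥ :=
  ⟨fun _ hU a _ hm => texp_apply_sub_self_mem_lieBr ψ hU a hm,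
    fun i _ => expIter_le_lieIter ψ i,
    le_bot_iff.mp (h ▸ expIter_le_lieIter ψ d)⟩

/-- For a Lie action of length `d < p`: `(exp(ψ)(a) - id)(U) ⊆ [U, L]` for every invariant
submodule `U`; consequently `[M, _i exp(L)] ⊆ [M, _i L]` for all `i ≥ 1`, and in particular
the group action `exp(ψ)` also has length at most `d`. -/
theorem stmt7 {p : ℕ} [Fact p.Prime] {M L : Type*} [AddCommGroup M] [Module ℤ_[p] M]
    [LieRing L] [LieAlgebra ℤ_[p] L] (ψ : L →ₗ⁅ℤ_[p]⁆ Module.End ℤ_[p] M)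
    (d : ℕ) (hd : d < p) (h : lieIter p ψ d = ⊥) :
    (∀ U : Submodule ℤ_[p] M, (∀ a : L, ∀ m ∈ U, ψ a m ∈ U) →
      ∀ a : L, ∀ m ∈ U, texp p (ψ a) m - m ∈ lieBr p ψ U) ∧
    (∀ i : ℕ, 1 ≤ i → expIter p ψ i ≤ lieIter p ψ i) ∧
    expIter p ψ d = ⊥ :=
  stmt7_general ψ d h
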